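/- arXiv:math/0111206 — 2 statements merged into one kernel-verified Lean document; each statement's English description precedes it below -/
import Mathlib

section
/- Let A be a Banach algebra with a bounded approximate diagonal, and let I be a closed ideal of A with a bounded approximate identity. Then the quotient algebra A/I has a bounded approximate diagonal. -/
open scoped TensorProduct
open Filter

/-- The projective tensor norm `‖u‖ = inf { Σ ‖xᵢ‖‖yᵢ‖ : u = Σ xᵢ ⊗ yᵢ }` on the
algebraic tensor product, used to model the projective tensor product `A ⊗̂ A`. -/
noncomputable def projNorm (A : Type*) [NonUnitalNormedRing A] [NormedSpace ℂ A]
    (u : A ⊗[ℂ] A) : ℝ :=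
  sInf {r : ℝ | ∃ (n : ℕ) (x : Fin n → A) (y : Fin n → A),
    u = ∑ i, x i ⊗ₜ[ℂ] y i ∧ r = ∑ i, ‖x i‖ * ‖y i‖}

/-- The left module action `a · (x ⊗ y) = (a x) ⊗ y` on `A ⊗ A`. -/
noncomputable def lact (A : Type*) [NonUnitalNormedRing A] [NormedSpace ℂ A]
    [SMulCommClass ℂ A A] [IsScalarTower ℂ A A] (a : A) : A ⊗[ℂ] A →ₗ[ℂ] A ⊗[ℂ] A :=
  TensorProduct.map (LinearMap.mulLeft ℂ a) LinearMap.id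

/-- The right module action `(x ⊗ y) · a = x ⊗ (y a)` on `A ⊗ A`. -/
noncomputable def ract (A : Type*) [NonUnitalNormedRing A] [NormedSpace ℂ A]
    [SMulCommClass ℂ A A] [IsScalarTower ℂ A A] (a : A) : A ⊗[ℂ] A →ₗ[ℂ] A ⊗[ℂ] A :=
  TensorProduct.map LinearMap.id (LinearMap.mulRight ℂ a)

/-- The multiplication map `Δ : A ⊗ A → A`, `Δ(x ⊗ y) = xy`. -/
noncomputable def diagMap (A : Type*) [NonUnitalNormedRing A] [NormedSpace ℂ A]
    [SMulCommClass ℂ A A] [IsScalarTower ℂ A A] : A ⊗[ℂ] A →ₗ[ℂ] A :=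
  TensorProduct.lift (LinearMap.mul ℂ A)

/-- `A` has an approximate diagonal bounded by `C`: a net `(dₐ)` in `A ⊗̂ A` with
`projNorm (dₐ) ≤ C`, `a·dₐ − dₐ·a → 0` and `Δ(dₐ)·a → a` for all `a ∈ A`. -/
def HasApproxDiagonal (A : Type*) [NonUnitalNormedRing A] [NormedSpace ℂ A]
    [SMulCommClass ℂ A A] [IsScalarTower ℂ A A] (C : ℝ) : Prop :=
  ∃ (ι : Type) (l : Filter ι) (d : ι → A ⊗[ℂ] A), l.NeBot ∧
    (∀ i, projNorm A (d i) ≤ C) ∧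
    (∀ a : A, Tendsto (fun i => projNorm A (lact A a (d i) - ract A a (d i))) l (nhds 0)) ∧
    (∀ a : A, Tendsto (fun i => ‖diagMap A (d i) * a - a‖) l (nhds 0))

/-- `A` has a bounded approximate diagonal. -/
def HasBoundedApproxDiagonal (A : Type*) [NonUnitalNormedRing A] [NormedSpace ℂ A]
    [SMulCommClass ℂ A A] [IsScalarTower ℂ A A] : Prop :=
  ∃ C : ℝ, HasApproxDiagonal A C

/-- Every element of the algebraic tensor product has a finite representation. -/
lemma exists_fin_rep {A : Type*} [NonUnitalNormedRing A] [NormedSpace ℂ A]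
    (u : A ⊗[ℂ] A) : ∃ (n : ℕ) (x y : Fin n → A), u = ∑ i, x i ⊗ₜ[ℂ] y i := by
  induction u with
  | zero => exact ⟨0, ![], ![], by simp⟩
  | tmul a b => exact ⟨1, ![a], ![b], by simp⟩
  | add u v hu hv =>
    obtain ⟨m, x, y, rfl⟩ := hu
    obtain ⟨n, x', y', rfl⟩ := hv
    refine ⟨m + n, Fin.append x x', Fin.append y y', ?_⟩
    rw [Fin.sum_univ_add]
    simp [Fin.append_left, Fin.append_right]

/-- The projective tensor norm is nonnegative. -/
lemma projNorm_nonneg (A : Type*) [NonUnitalNormedRing A] [NormedSpace ℂ A]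
    (u : A ⊗[ℂ] A) : 0 ≤ projNorm A u := by
  apply Real.sInf_nonneg
  rintro r ⟨n, x, y, -, rfl⟩
  exact Finset.sum_nonneg fun i _ => mul_nonneg (norm_nonneg _) (norm_nonneg _)

/-- If the Banach algebra `A` has a bounded approximate diagonal and `I` is a
closed (two-sided) ideal of `A` with a bounded approximate identity, then the quotient
Banach algebra `A/I` has a bounded approximate diagonal.  The quotient is modelled by any
Banach algebra `B` together with a surjective algebra homomorphism `π : A → B` whose
kernel is `I` and which induces the quotient norm: `‖b‖ = inf { ‖a‖ : π a = b }`. -/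
theorem stmt_5 (A B : Type*) [NonUnitalNormedRing A] [NormedSpace ℂ A]
    [SMulCommClass ℂ A A] [IsScalarTower ℂ A A] [CompleteSpace A]
    [NonUnitalNormedRing B] [NormedSpace ℂ B]
    [SMulCommClass ℂ B B] [IsScalarTower ℂ B B] [CompleteSpace B]
    (hA : HasBoundedApproxDiagonal A)
    (I : NonUnitalSubalgebra ℂ A) (hIc : IsClosed (I : Set A))
    (hIl : ∀ (a : A), ∀ x ∈ I, a * x ∈ I) (hIr : ∀ (a : A), ∀ x ∈ I, x * a ∈ I)
    (hbai : ∃ (ι : Type) (l : Filter ι) (e : ι → A) (C : ℝ), l.NeBot ∧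
      (∀ i, e i ∈ I) ∧ (∀ i, ‖e i‖ ≤ C) ∧
      ∀ x ∈ I, Tendsto (fun i => ‖e i * x - x‖) l (nhds 0) ∧
               Tendsto (fun i => ‖x * e i - x‖) l (nhds 0))
    (π : A →ₗ[ℂ] B) (hπmul : ∀ a b : A, π (a * b) = π a * π b)
    (hπsurj : Function.Surjective π) (hker : ∀ a : A, π a = 0 ↔ a ∈ I)
    (hquot : ∀ b : B, ‖b‖ = sInf {r : ℝ | ∃ a : A, π a = b ∧ r = ‖a‖}) :
    HasBoundedApproxDiagonal B := by
  obtain ⟨C, ι, l, d, hne, hbd, hcomm, hdiag⟩ := hA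
  -- π is contractive
  have hπle : ∀ a : A, ‖π a‖ ≤ ‖a‖ := by
    intro a
    rw [hquot (π a)]
    refine csInf_le ⟨0, ?_⟩ ⟨a, rfl, rfl⟩
    rintro r ⟨a', -, rfl⟩
    exact norm_nonneg a'
  set Φ : A ⊗[ℂ] A →ₗ[ℂ] B ⊗[ℂ] B := TensorProduct.map π π with hΦdef
  -- Φ decreases projective norm
  have hle : ∀ u : A ⊗[ℂ] A, projNorm B (Φ u) ≤ projNorm A u := by
    intro u
    obtain ⟨n₀, x₀, y₀, hrep⟩ := exists_fin_rep u
    refine le_csInf ⟨_, n₀, x₀, y₀, hrep, rfl⟩ ?_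
    rintro r ⟨n, x, y, hu, rfl⟩
    have hbdd : BddBelow {r : ℝ | ∃ (n : ℕ) (x : Fin n → B) (y : Fin n → B),
        Φ u = ∑ i, x i ⊗ₜ[ℂ] y i ∧ r = ∑ i, ‖x i‖ * ‖y i‖} := by
      refine ⟨0, ?_⟩
      rintro r ⟨m, x', y', -, rfl⟩
      exact Finset.sum_nonneg fun i _ => mul_nonneg (norm_nonneg _) (norm_nonneg _)
    have hmem : Φ u = ∑ i, (π (x i)) ⊗ₜ[ℂ] (π (y i)) := by
      rw [hu, map_sum]
      simp [hΦdef]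
    refine le_trans (csInf_le hbdd ⟨n, fun i => π (x i), fun i => π (y i), hmem, rfl⟩) ?_
    exact Finset.sum_le_sum fun i _ =>
      mul_le_mul (hπle _) (hπle _) (norm_nonneg _) (norm_nonneg _)
  -- compatibility identities
  have hlact : ∀ (a : A) (u : A ⊗[ℂ] A), Φ (lact A a u) = lact B (π a) (Φ u) := by
    intro a u
    induction u with
    | zero => simp
    | tmul x y => simp [lact, hΦdef, hπmul]
    | add u v hu hv => simp [map_add, hu, hv]
  have hract : ∀ (a : A) (u : A ⊗[ℂ] A), Φ (ract A a u) = ract B (π a) (Φ u) := by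
    intro a u
    induction u with
    | zero => simp
    | tmul x y => simp [ract, hΦdef, hπmul]
    | add u v hu hv => simp [map_add, hu, hv]
  have hdiagc : ∀ u : A ⊗[ℂ] A, diagMap B (Φ u) = π (diagMap A u) := by
    intro u
    induction u with
    | zero => simp
    | tmul x y => simp [diagMap, hΦdef, hπmul]
    | add u v hu hv => simp [map_add, hu, hv]
  refine ⟨C, ι, l, fun i => Φ (d i), hne, fun i => le_trans (hle _) (hbd i), ?_, ?_⟩
  · intro b
    obtain ⟨a, rfl⟩ := hπsurj b
    refine squeeze_zero (fun i => projNorm_nonneg B _) (fun i => ?_) (hcomm a)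
    have key : lact B (π a) (Φ (d i)) - ract B (π a) (Φ (d i))
        = Φ (lact A a (d i) - ract A a (d i)) := by
      rw [map_sub, hlact, hract]
    rw [key]
    exact hle _
  · intro b
    obtain ⟨a, rfl⟩ := hπsurj b
    refine squeeze_zero (fun i => norm_nonneg _) (fun i => ?_) (hdiag a)
    have key : diagMap B (Φ (d i)) * π a - π a = π (diagMap A (d i) * a - a) := by
      rw [map_sub, hdiagc, hπmul]
    rw [key]
    exact hπle _
end

section
/- Let G be a topological group. If f : G → ℂ is almost periodic (its left translates form a relatively compact set in the uniform norm), then the set of right translates { Rₓf : x ∈ G } is also relatively compact in the uniform norm. -/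
open BoundedContinuousFunction

/-- The left translate `Lₓf`, `(Lₓf)(y) = f(xy)`, of a bounded continuous function. -/
noncomputable def leftTranslate {G : Type*} [Group G] [TopologicalSpace G]
    [IsTopologicalGroup G] (x : G) (f : G →ᵇ ℂ) : G →ᵇ ℂ :=
  f.compContinuous ⟨fun y => x * y, by continuity⟩

/-- The right translate `Rₓf`, `(Rₓf)(y) = f(yx)`, of a bounded continuous function. -/
noncomputable def rightTranslate {G : Type*} [Group G] [TopologicalSpace G]
    [IsTopologicalGroup G] (x : G) (f : G →ᵇ ℂ) : G →ᵇ ℂ :=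
  f.compContinuous ⟨fun y => y * x, by continuity⟩

/-!
Since `(R_x f)(z) = f(z x) = (L_z f)(x)`, the distance between two right translates `R_x f`
and `R_y f` is at most the uniform distance, on the compact set `K` of limits of left
translates, between the evaluation maps `g ↦ g x` and `g ↦ g y`. These evaluation maps form a
uniformly bounded family of `1`-Lipschitz functions on `K`, which is relatively compact by
Arzelà–Ascoli; its total boundedness is inherited by the right translates.
-/

open Set

theorem totallyBounded_range_of_dist_le {ι α β : Type*} [PseudoMetricSpace α]
    [PseudoMetricSpace β] {a : ι → α} {b : ι → β}
    (hab : ∀ i j, dist (a i) (a j) ≤ dist (b i) (b j)) (hb : TotallyBounded (range b)) :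
    TotallyBounded (range a) := by
  let _ : PseudoMetricSpace ι := PseudoMetricSpace.induced b ‹_›
  have hι : TotallyBounded (univ : Set ι) := by
    simpa using totallyBounded_preimage
      (PseudoMetricSpace.isometry_induced b).isUniformInducing hb
  have ha : LipschitzWith 1 a := LipschitzWith.mk_one hab
  simpa [image_univ] using hι.image ha.uniformContinuous

section EvalOn

variable {α β : Type*} [TopologicalSpace α] [NormedAddCommGroup β]

noncomputable def evalOn (K : Set (α →ᵇ β)) [CompactSpace K] (x : α) : K →ᵇ β :=
  .mkOfCompact ⟨fun g => (g : α →ᵇ β) x, (continuous_eval_const x).comp continuous_subtype_val⟩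

lemma isCompact_closure_range_evalOn [ProperSpace β] (K : Set (α →ᵇ β)) [CompactSpace K] :
    IsCompact (closure (range (evalOn K))) := by
  obtain ⟨C, hC⟩ := isBounded_iff_forall_norm_le.1 (isCompact_iff_compactSpace.2 ‹_›).isBounded
  refine arzela_ascoli (Metric.closedBall 0 C) (isCompact_closedBall 0 C) _ ?_ ?_
  · rintro _ g ⟨x, rfl⟩
    exact mem_closedBall_zero_iff.2 ((g.1.norm_coe_le_norm x).trans (hC g g.2))
  · refine (LipschitzWith.uniformEquicontinuous _ 1 ?_).equicontinuous
    rintro ⟨_, x, rfl⟩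
    exact LipschitzWith.mk_one fun _ _ => dist_coe_le_dist x

end EvalOn

lemma dist_rightTranslate_le_dist_evalOn {G : Type*} [Group G] [TopologicalSpace G]
    [IsTopologicalGroup G] {f : G →ᵇ ℂ} {K : Set (G →ᵇ ℂ)} [CompactSpace K]
    (hK : range (fun z => leftTranslate z f) ⊆ K) (x y : G) :
    dist (rightTranslate x f) (rightTranslate y f) ≤ dist (evalOn K x) (evalOn K y) :=
  (dist_le dist_nonneg).2 fun z =>
    dist_coe_le_dist (f := evalOn K x) (g := evalOn K y) ⟨_, hK ⟨z, rfl⟩⟩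

/-- If `f : G → ℂ` is almost periodic (its left translates form a relatively
compact set in the uniform norm), then its set of right translates is also relatively
compact in the uniform norm. -/
theorem stmt_10 (G : Type*) [Group G] [TopologicalSpace G] [IsTopologicalGroup G]
    (f : G →ᵇ ℂ)
    (hf : IsCompact (closure (Set.range fun x : G => leftTranslate x f))) :
    IsCompact (closure (Set.range fun x : G => rightTranslate x f)) := by
  have := isCompact_iff_compactSpace.1 hf
  have hright : TotallyBounded (range fun x => rightTranslate x f) :=
    totallyBounded_range_of_dist_le (dist_rightTranslate_le_dist_evalOn subset_closure)
      ((isCompact_closure_range_evalOn _).totallyBounded.subset subset_closure)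
  exact hright.closure.isCompact_of_isClosed isClosed_closure
end
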